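/- arXiv:2507.09012 — 3 statements merged into one kernel-verified Lean document; each statement's English description precedes it below -/
import Mathlib

section
/- Let k > 1 and M_0 ≥ 6 be integers and let x be a real number such that M := M(x,k) satisfies M ≥ M_0. Then log M < (log x)/((k+1)·A(M_0)), where A(y) = log(y/2)/log y. -/
noncomputable section

/-- The j-th prime, with `nthPrime 1 = 2`, `nthPrime 2 = 3`, ... -/
def nthPrime (j : ℕ) : ℕ := Nat.nth Nat.Prime (j - 1)

/-- The chain sum `p_b^k + p_{b+1}^k + ... + p_t^k`. -/
def chainSum (k b t : ℕ) : ℕ := ∑ j ∈ Finset.Icc b t, nthPrime j ^ k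

/-- `sk k x` is the total number of k-gleeful representations of integers ≤ x,
i.e. the number of pairs `1 ≤ b ≤ t` with `p_b^k + ... + p_t^k ≤ x`. -/
def sk (k : ℕ) (x : ℝ) : ℕ :=
  Set.ncard {bt : ℕ × ℕ | 1 ≤ bt.1 ∧ bt.1 ≤ bt.2 ∧ (chainSum k bt.1 bt.2 : ℝ) ≤ x}

/-- `skm k m x` is the number of indices `n ≥ 1` with
`p_n^k + p_{n+1}^k + ... + p_{n+m-1}^k ≤ x`. -/
def skm (k m : ℕ) (x : ℝ) : ℕ :=
  Set.ncard {b : ℕ | 1 ≤ b ∧ (chainSum k b (b + m - 1) : ℝ) ≤ x}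

/-- The prefix sum `p_1^k + ... + p_M^k`. -/
def prefixSum (k M : ℕ) : ℕ := ∑ j ∈ Finset.Icc 1 M, nthPrime j ^ k

/-- The prime counting function: the number of primes ≤ t. -/
def primePi (t : ℝ) : ℕ := Set.ncard {p : ℕ | p.Prime ∧ (p : ℝ) ≤ t}

/-- `fkm k m n` is the number of indices `b ≥ 1` with
`n = p_b^k + p_{b+1}^k + ... + p_{b+m-1}^k`. -/
def fkm (k m n : ℕ) : ℕ :=
  Set.ncard {b : ℕ | 1 ≤ b ∧ n = chainSum k b (b + m - 1)}

def A (y : ℝ) : ℝ := Real.log (y / 2) / Real.log y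

def B (y : ℝ) (k : ℕ) : ℝ :=
  Real.log (y + 1) / Real.log y +
    Real.log ((Real.log (y + 1)) ^ 2) / Real.log y * ((k : ℝ) / ((k : ℝ) + 1))

def C (y : ℝ) (k : ℕ) : ℝ :=
  (y / (y - 1)) ^ ((1 : ℝ) / ((k : ℝ) + 1)) * B y k ^ ((k : ℝ) / ((k : ℝ) + 1))

def D (y : ℝ) (k : ℕ) : ℝ :=
  (y / (y + 3)) *
    (Real.log (y / 2) / (Real.log y + 2 * Real.log (Real.log (y + 2)))) ^
      ((k : ℝ) / ((k : ℝ) + 1))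

def E (y : ℝ) (k : ℕ) : ℝ := 1 + 1 / (((k : ℝ) + 1) * A y - 1)

def F (y : ℝ) (k : ℕ) : ℝ :=
  ((y + 1) / y) ^ (((k : ℝ) - 1) / (k : ℝ)) *
    (4 : ℝ) ^ (((k : ℝ) - 1) / ((k : ℝ) * ((k : ℝ) + 1))) *
    C y k ^ (((k : ℝ) - 1) / (k : ℝ)) * E y k

def U (y : ℝ) (k : ℕ) : ℝ := 1.25506 * F y k

def L (y : ℝ) (k : ℕ) : ℝ := ((y - 1) / y) * D y k ^ 2

def ck (k : ℕ) : ℝ :=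
  ((k : ℝ) ^ 2 / ((k : ℝ) - 1)) * ((k : ℝ) + 1) ^ (((k : ℝ) - 1) / (k : ℝ))


lemma nth_prime_ge (n : ℕ) : n + 2 ≤ Nat.nth Nat.Prime n := by
  induction n with
  | zero =>
    have h2 : Nat.Prime 2 := by norm_num
    have : Nat.nth Nat.Prime (Nat.count Nat.Prime 2) = 2 := Nat.nth_count h2
    have hc : Nat.count Nat.Prime 2 = 0 := by decide
    rw [hc] at this
    omega
  | succ n ih =>
    have h : Nat.nth Nat.Prime n < Nat.nth Nat.Prime (n + 1) :=
      (Nat.nth_lt_nth Nat.infinite_setOf_prime).2 (Nat.lt_succ_self n)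
    omega

lemma nthPrime_ge (j : ℕ) (hj : 1 ≤ j) : j + 1 ≤ nthPrime j := by
  have := nth_prime_ge (j - 1)
  unfold nthPrime
  omega

lemma key_nat (k M : ℕ) (hk : 1 ≤ k) (hM : 6 ≤ M) :
    M ^ (k + 1) < prefixSum k M * 2 ^ (k + 1) := by
  set m := M / 2 with hm
  have h1 : (M - m) * (m + 2) ^ k ≤ prefixSum k M := by
    have hsub : Finset.Icc (m + 1) M ⊆ Finset.Icc 1 M := by
      intro j hj; simp only [Finset.mem_Icc] at *; omega
    calc (M - m) * (m + 2) ^ k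
        = ∑ _j ∈ Finset.Icc (m + 1) M, (m + 2) ^ k := by
          rw [Finset.sum_const, Nat.card_Icc, smul_eq_mul]
          congr 1; omega
      _ ≤ ∑ j ∈ Finset.Icc (m + 1) M, nthPrime j ^ k := by
          apply Finset.sum_le_sum
          intro j hj
          simp only [Finset.mem_Icc] at hj
          exact Nat.pow_le_pow_left (by have := nthPrime_ge j (by omega); omega) k
      _ ≤ prefixSum k M := Finset.sum_le_sum_of_subset hsub
  have h2 : M ^ (k + 1) < (M - m) * (m + 2) ^ k * 2 ^ (k + 1) := by
    have hMm : M ≤ 2 * (M - m) := by omega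
    have hmM : M < 2 * (m + 2) := by omega
    calc M ^ (k + 1) = M * M ^ k := by ring
      _ < M * (2 * (m + 2)) ^ k := by
          have hp : M ^ k < (2 * (m + 2)) ^ k := Nat.pow_lt_pow_left hmM (by omega)
          exact mul_lt_mul_of_pos_left hp (by omega)
      _ ≤ (2 * (M - m)) * (2 * (m + 2)) ^ k :=
          Nat.mul_le_mul_right _ hMm
      _ = (M - m) * (m + 2) ^ k * 2 ^ (k + 1) := by
          rw [Nat.mul_pow]; ring
  calc M ^ (k + 1) < (M - m) * (m + 2) ^ k * 2 ^ (k + 1) := h2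
    _ ≤ prefixSum k M * 2 ^ (k + 1) := Nat.mul_le_mul_right _ h1

theorem logM_upper (k M0 : ℕ) (hk : 1 < k) (hM0 : 6 ≤ M0)
    (x : ℝ) (M : ℕ)
    (hM1 : (prefixSum k M : ℝ) ≤ x) (hM2 : x < (prefixSum k (M + 1) : ℝ))
    (hMM0 : M0 ≤ M) :
    Real.log (M : ℝ) < Real.log x / (((k : ℝ) + 1) * A (M0 : ℝ)) := by
  have hM6 : 6 ≤ M := le_trans hM0 hMM0
  have hM0r : (6 : ℝ) ≤ (M0 : ℝ) := by exact_mod_cast hM0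
  have hMr : (6 : ℝ) ≤ (M : ℝ) := by exact_mod_cast hM6
  have hM0M : (M0 : ℝ) ≤ (M : ℝ) := by exact_mod_cast hMM0
  have hlogM0 : (0 : ℝ) < Real.log M0 := Real.log_pos (by linarith)
  have hlogM : (0 : ℝ) < Real.log M := Real.log_pos (by linarith)
  have hlog2 : (0 : ℝ) ≤ Real.log 2 := Real.log_nonneg (by norm_num)
  -- A M0 ≤ A M, both positive
  have hA_eq : ∀ y : ℝ, 6 ≤ y → A y = 1 - Real.log 2 / Real.log y := by
    intro y hy
    unfold A
    have hly : Real.log y ≠ 0 := ne_of_gt (Real.log_pos (by linarith))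
    rw [Real.log_div (by linarith) (by norm_num), sub_div, div_self hly]
  have hAM0 : 0 < A (M0 : ℝ) := by
    rw [hA_eq _ hM0r]
    have : Real.log 2 / Real.log M0 < 1 := by
      rw [div_lt_one hlogM0]
      exact Real.log_lt_log (by norm_num) (by linarith)
    linarith
  have hAle : A (M0 : ℝ) ≤ A (M : ℝ) := by
    rw [hA_eq _ hM0r, hA_eq _ hMr]
    have : Real.log 2 / Real.log M ≤ Real.log 2 / Real.log M0 :=
      div_le_div_of_nonneg_left hlog2 hlogM0
        (Real.log_le_log (by linarith) hM0M)
    linarith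
  have hc : 0 < ((k : ℝ) + 1) * A (M0 : ℝ) := by
    have : (0 : ℝ) < (k : ℝ) + 1 := by positivity
    positivity
  rw [lt_div_iff₀ hc]
  -- key: ((M:ℝ)/2)^(k+1) < prefixSum k M ≤ x
  have hkey : ((M : ℝ) / 2) ^ (k + 1) < (prefixSum k M : ℝ) := by
    have h := key_nat k M (le_of_lt hk) hM6
    have h' : ((M : ℝ)) ^ (k + 1) < (prefixSum k M : ℝ) * 2 ^ (k + 1) := by
      exact_mod_cast h
    rw [div_pow, div_lt_iff₀ (by positivity)]
    exact h'
  have hx : ((M : ℝ) / 2) ^ (k + 1) < x := lt_of_lt_of_le hkey hM1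
  have hM2pos : (0 : ℝ) < (M : ℝ) / 2 := by linarith
  have hlogx : ((k : ℝ) + 1) * Real.log ((M : ℝ) / 2) < Real.log x := by
    have := Real.log_lt_log (by positivity) hx
    rwa [Real.log_pow, Nat.cast_add, Nat.cast_one] at this
  have hAMlog : A (M : ℝ) * Real.log M = Real.log ((M : ℝ) / 2) := by
    unfold A
    exact div_mul_cancel₀ _ (ne_of_gt hlogM)
  calc Real.log M * (((k : ℝ) + 1) * A (M0 : ℝ))
      ≤ Real.log M * (((k : ℝ) + 1) * A (M : ℝ)) := by
        apply mul_le_mul_of_nonneg_left _ (le_of_lt hlogM)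
        apply mul_le_mul_of_nonneg_left hAle (by positivity)
    _ = ((k : ℝ) + 1) * (A (M : ℝ) * Real.log M) := by ring
    _ = ((k : ℝ) + 1) * Real.log ((M : ℝ) / 2) := by rw [hAMlog]
    _ < Real.log x := hlogx
end
end

section
/- Let k > 1 and M_0 ≥ 6 be integers and let x be a real number such that M := M(x,k) satisfies M ≥ M_0. Then log M ≥ (log x)/((k+1)·B(M_0,k)), where B(y,k) = log(y+1)/log y + (log((log(y+1))^2)/log y)·(k/(k+1)). -/
noncomputable section

/-!
Since `x < p_1^k + ⋯ + p_{M+1}^k ≤ (M+1) p_{M+1}^k`, everything rests on an upper bound for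
`log p_{M+1}`. Chebyshev's bound `π(n) ≥ (n log 2 - log (n+1)) / log n` at `n = p_j - 1` gives
`(p_j - 1) log 2 ≤ j log p_j`, and inverting it (concavity of `log`) yields `p_n ≤ n (log n)^2`
for `n ≥ 16` and `p_{M+1} ≤ (M+1) M^{2/3}` for `M ≥ 23`; the cases `6 ≤ M ≤ 22` are checked
against explicit primes.

Write `B(y,k) = r(y) + 2 g(y) k/(k+1)` with `r(y) = log (y+1) / log y` and
`g(y) = log log (y+1) / log y`. Then `log (M+1) ≤ r(M₀) log M` because `r` is decreasing, and
`log p_{M+1} ≤ log (M+1) + 2 g(M₀) log M`: for `M₀ ≥ 15` because `g` is decreasing there,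
for `6 ≤ M₀ ≤ 14` because then `g(M₀) ≥ 1/3`. Substituting both into
`log x ≤ log (M+1) + k log p_{M+1}` gives `log x ≤ (k+1) B(M₀,k) log M`.
-/

open Real

lemma mul_log_le_mul_log_of_pow_le {x y : ℝ} {a b : ℕ} (hy : 0 < y) (h : y ^ b ≤ x ^ a) :
    b * log y ≤ a * log x := by
  rw [← log_pow, ← log_pow]
  exact log_le_log (pow_pos hy b) h

lemma log_succ_div_log_le_of_le {a b : ℝ} (ha : 1 < a) (hab : a ≤ b) :
    log (b + 1) / log b ≤ log (a + 1) / log a := by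
  have hla : 0 < log a := log_pos ha
  have hlab : log a ≤ log b := log_le_log (by linarith) hab
  have hstep : log (b + 1) - log b ≤ log (a + 1) - log a := by
    rw [← log_div (by linarith) (by linarith), ← log_div (by linarith) (by linarith)]
    refine log_le_log (div_pos (by linarith) (by linarith)) ?_
    rw [div_le_div_iff₀ (by linarith) (by linarith)]
    linarith
  have hstep0 : 0 ≤ log (a + 1) - log a := by
    linarith [log_le_log (by linarith : 0 < a) (by linarith : a ≤ a + 1)]
  rw [div_le_div_iff₀ (by linarith) hla]
  nlinarith

/-- With `u = log (y + 1)`, `log u / log y = (log u / u) * (log (y + 1) / log y)` is a product of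
two nonnegative antitone functions as soon as `u ≥ e`. -/
lemma log_log_succ_div_log_le_of_le {a b : ℝ} (ha : 1 < a) (he : exp 1 ≤ log (a + 1))
    (hab : a ≤ b) : log (log (b + 1)) / log b ≤ log (log (a + 1)) / log a := by
  have hb : 1 < b := ha.trans_le hab
  have hu : log (a + 1) ≤ log (b + 1) := log_le_log (by linarith) (by linarith)
  have factor : ∀ y : ℝ, 1 < y →
      log (log (y + 1)) / log y = log (log (y + 1)) / log (y + 1) * (log (y + 1) / log y) :=
    fun y hy ↦ (div_mul_div_cancel₀ (log_pos (by linarith)).ne').symm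
  rw [factor a ha, factor b hb]
  have he1 : 1 ≤ log (a + 1) := le_trans (by linarith [add_one_le_exp 1]) he
  apply mul_le_mul
  · exact log_div_self_antitoneOn he (he.trans hu) hu
  · exact log_succ_div_log_le_of_le ha hab
  · exact div_nonneg (log_nonneg (by linarith)) (log_pos (by linarith)).le
  · exact div_nonneg (log_nonneg he1) (by linarith)

lemma le_of_sub_one_mul_log_two_le_mul_log {p n X : ℝ} (hp : 0 < p) (hn : 0 ≤ n)
    (hnX : n < X * log 2) (hcheb : (p - 1) * log 2 ≤ n * log p)
    (hX : n * log X + log 2 ≤ X * log 2) : p ≤ X := by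
  have hX0 : 0 < X := pos_of_mul_pos_left (hn.trans_lt hnX) (log_nonneg one_le_two)
  have hlog : log p ≤ log X + (p / X - 1) := by
    have := log_le_sub_one_of_pos (div_pos hp hX0)
    rw [log_div hp.ne' hX0.ne'] at this
    linarith
  have hpX : p / X * X = p := div_mul_cancel₀ p hX0.ne'
  have key : p * (X * log 2 - n) ≤ X * (X * log 2 - n) := by
    nlinarith [mul_le_mul_of_nonneg_left hlog hn]
  exact le_of_mul_le_mul_right key (by linarith)

lemma log_le_log_add_two_mul_log_log {p n : ℝ} (hp : 0 < p) (hn : 16 ≤ n)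
    (hcheb : (p - 1) * log 2 ≤ n * log p) : log p ≤ log n + 2 * log (log n) := by
  set L := log n
  have hl0 := log_two_gt_d9
  have hl1 := log_two_lt_d9
  have hL : 4 * log 2 ≤ L := by
    simpa using mul_log_le_mul_log_of_pow_le (a := 1) (b := 4) two_pos (by norm_num; linarith)
  have hL0 : 0 < L := by linarith
  have hlogL : log L ≤ L / 2 - 1 + log 2 := by
    have := log_le_sub_one_of_pos (half_pos hL0)
    rw [log_div hL0.ne' two_ne_zero] at this
    linarith
  have hquad : 2 * L - 2 + 2 * log 2 + log 2 / 16 ≤ L ^ 2 * log 2 := by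
    have hmono : 0 ≤ (L - 4 * log 2) * (log 2 * (L + 4 * log 2) - 2) :=
      mul_nonneg (by linarith) (by nlinarith)
    have hbase : 8 * log 2 - 2 + 2 * log 2 + log 2 / 16 ≤ 16 * log 2 ^ 3 := by
      linarith [pow_le_pow_left₀ (by norm_num) hl0.le 3]
    nlinarith
  have hpX : p ≤ n * L ^ 2 := by
    refine le_of_sub_one_mul_log_two_le_mul_log hp (by linarith) ?_ hcheb ?_
    · nlinarith
    · rw [log_mul (by positivity) (by positivity), log_pow]
      push_cast
      nlinarith [mul_le_mul_of_nonneg_left hlogL (by linarith : (0:ℝ) ≤ n),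
        mul_le_mul_of_nonneg_left hquad (by linarith : (0:ℝ) ≤ n)]
  calc log p ≤ log (n * L ^ 2) := log_le_log hp hpX
    _ = L + 2 * log L := by
      rw [log_mul (by positivity) (by positivity), log_pow]; push_cast; ring

lemma log_le_log_succ_add_two_thirds_mul_log {p M : ℝ} (hp : 0 < p) (hM : 23 ≤ M)
    (hcheb : (p - 1) * log 2 ≤ (M + 1) * log p) : log p ≤ log (M + 1) + 2 / 3 * log M := by
  set w := 2 / 3 * log M with hw_def
  have hl0 := log_two_gt_d9
  have hl1 := log_two_lt_d9
  have hw : 3 * log 2 ≤ w := by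
    have := mul_log_le_mul_log_of_pow_le (a := 2) (b := 9) two_pos (by nlinarith : (2:ℝ) ^ 9 ≤ M ^ 2)
    push_cast at this
    linarith [hw_def]
  -- tangent line of `exp` at `3 log 2 = log 8`
  have hexp : 8 * (1 + (w - 3 * log 2)) ≤ exp w := by
    have h8 : exp (3 * log 2) = 8 := by
      rw [← log_rpow two_pos, exp_log (by positivity)]; norm_num
    calc 8 * (1 + (w - 3 * log 2)) ≤ exp (3 * log 2) * exp (w - 3 * log 2) := by
          rw [h8]; linarith [add_one_le_exp (w - 3 * log 2)]
      _ = exp w := by rw [← exp_add]; ring_nf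
  have hsucc : log (M + 1) ≤ log M + 1 / 23 := by
    have := log_le_sub_one_of_pos (by positivity : 0 < (M + 1) / M)
    rw [log_div (by positivity) (by positivity)] at this
    have : (M + 1) / M - 1 ≤ 1 / 23 := by
      rw [add_div, div_self (by positivity)]
      linarith [one_div_le_one_div_of_le (by norm_num) hM]
    linarith
  have hscalar : 5 / 2 * w + 1 / 23 + log 2 / 24 ≤ exp w * log 2 := by
    nlinarith [mul_le_mul_of_nonneg_right hexp (by linarith : (0:ℝ) ≤ log 2)]
  have hpX : p ≤ (M + 1) * exp w := by
    refine le_of_sub_one_mul_log_two_le_mul_log hp (by linarith) ?_ hcheb ?_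
    · nlinarith
    · rw [log_mul (by positivity) (exp_pos w).ne', log_exp]
      nlinarith [mul_le_mul_of_nonneg_left hscalar (by linarith : (0:ℝ) ≤ M + 1), hw_def]
  calc log p ≤ log ((M + 1) * exp w) := log_le_log hp hpX
    _ = log (M + 1) + w := by rw [log_mul (by positivity) (exp_pos w).ne', log_exp]

lemma nthPrime_prime (j : ℕ) : (nthPrime j).Prime := Nat.prime_nth_prime _

lemma nthPrime_cast_pos (j : ℕ) : (0 : ℝ) < nthPrime j := by
  exact_mod_cast (nthPrime_prime j).pos

lemma nthPrime_mono : Monotone nthPrime :=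
  fun _ _ h ↦ Nat.nth_monotone Nat.infinite_setOfPred_prime (Nat.sub_le_sub_right h 1)

lemma primeCounting_nthPrime_sub_one (j : ℕ) : Nat.primeCounting (nthPrime j - 1) = j - 1 := by
  rw [Nat.primeCounting_sub_one, nthPrime, Nat.primeCounting'_nth_eq]

lemma nthPrime_succ_le_of_lt_count {b v : ℕ} (h : b < Nat.count Nat.Prime (v + 1)) :
    nthPrime (b + 1) ≤ v :=
  Nat.lt_succ_iff.mp (Nat.nth_lt_of_lt_count h)

lemma sub_one_mul_log_two_le_mul_log_nthPrime {j : ℕ} (hj : 1 ≤ j) :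
    ((nthPrime j : ℝ) - 1) * log 2 ≤ j * log (nthPrime j) := by
  have hπ := Chebyshev.pi_ge (nthPrime j - 1)
  rw [primeCounting_nthPrime_sub_one] at hπ
  have hp2 := (nthPrime_prime j).two_le
  generalize nthPrime j = p at hπ hp2 ⊢
  have hj' : (1 : ℝ) ≤ j := by exact_mod_cast hj
  obtain ⟨n, rfl⟩ : ∃ n, p = n + 1 := ⟨p - 1, by omega⟩
  rcases (show 1 ≤ n by omega).eq_or_lt with rfl | hn
  · norm_num; nlinarith [log_nonneg one_le_two]
  have hn' : (1 : ℝ) < n := by exact_mod_cast hn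
  rw [Nat.add_sub_cancel, div_le_iff₀ (log_pos hn')] at hπ
  push_cast [Nat.cast_sub hj] at hπ ⊢
  have hlog : log (n : ℝ) ≤ log (n + 1) := log_le_log (by linarith) (by linarith)
  nlinarith [mul_le_mul_of_nonneg_left hlog (by linarith : (0:ℝ) ≤ j - 1)]

lemma nthPrime_succ_pow_three_le {M : ℕ} (h6 : 6 ≤ M) (h22 : M ≤ 22) :
    nthPrime (M + 1) ^ 3 ≤ (M + 1) ^ 3 * M ^ 2 := by
  have bucket : ∀ a b v : ℕ, a ≤ M → M ≤ b → b < Nat.count Nat.Prime (v + 1) →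
      v ^ 3 ≤ (a + 1) ^ 3 * a ^ 2 → nthPrime (M + 1) ^ 3 ≤ (M + 1) ^ 3 * M ^ 2 := by
    intro a b v ha hb hv hva
    have hp : nthPrime (M + 1) ≤ v :=
      (nthPrime_mono (by omega : M + 1 ≤ b + 1)).trans (nthPrime_succ_le_of_lt_count hv)
    calc nthPrime (M + 1) ^ 3 ≤ v ^ 3 := by gcongr
      _ ≤ (a + 1) ^ 3 * a ^ 2 := hva
      _ ≤ (M + 1) ^ 3 * M ^ 2 := by gcongr
  rcases (by omega : M ≤ 8 ∨ 9 ≤ M ∧ M ≤ 13 ∨ 14 ≤ M) with h | ⟨h9, h13⟩ | h14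
  · exact bucket 6 8 23 h6 h (by decide +kernel) (by norm_num)
  · exact bucket 9 13 43 h9 h13 (by decide +kernel) (by norm_num)
  · exact bucket 14 22 83 h14 h22 (by decide +kernel) (by norm_num)

lemma log_nthPrime_succ_le_log_succ_add_two_thirds_mul_log {M : ℕ} (hM : 6 ≤ M) :
    log (nthPrime (M + 1)) ≤ log (M + 1) + 2 / 3 * log M := by
  have hM' : (6 : ℝ) ≤ M := by exact_mod_cast hM
  rcases le_or_gt M 22 with h22 | h23
  · have hpow : (nthPrime (M + 1) : ℝ) ^ 3 ≤ ((M : ℝ) + 1) ^ 3 * (M : ℝ) ^ 2 := by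
      exact_mod_cast nthPrime_succ_pow_three_le hM h22
    have := log_le_log (by have := nthPrime_cast_pos (M + 1); positivity) hpow
    rw [log_pow, log_mul (by positivity) (by positivity), log_pow, log_pow] at this
    push_cast at this
    linarith
  · have hcheb := sub_one_mul_log_two_le_mul_log_nthPrime (j := M + 1) (by omega)
    push_cast at hcheb
    exact log_le_log_succ_add_two_thirds_mul_log (nthPrime_cast_pos _) (by exact_mod_cast h23) hcheb

lemma log_le_three_mul_log_log_succ {m : ℕ} (h6 : 6 ≤ m) (h14 : m ≤ 14) :
    log m ≤ 3 * log (log (m + 1)) := by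
  have bucket : ∀ (a b : ℕ) (r : ℝ), a ≤ m → m ≤ b → 0 < r → r ≤ log (a + 1) → (b : ℝ) ≤ r ^ 3 →
      log m ≤ 3 * log (log (m + 1)) := by
    intro a b r ha hb hr hra hbr
    have hm : (m : ℝ) ≤ r ^ 3 := le_trans (by exact_mod_cast hb) hbr
    have hrm : r ≤ log (m + 1) :=
      hra.trans (log_le_log (by positivity) (by gcongr))
    have h1 := log_le_log (by positivity) hm
    rw [log_pow] at h1
    push_cast at h1
    linarith [log_le_log hr hrm]
  have hl := log_two_gt_d9
  rcases (by omega : m ≤ 7 ∨ 8 ≤ m ∧ m ≤ 10 ∨ 11 ≤ m) with h | ⟨h8, h10⟩ | h11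
  · refine bucket 6 7 1.94 h6 h (by norm_num) ?_ (by norm_num)
    have := mul_log_le_mul_log_of_pow_le (a := 5) (b := 14) two_pos (by norm_num : (2:ℝ) ^ 14 ≤ 7 ^ 5)
    norm_num at this ⊢
    linarith
  · refine bucket 8 10 2.18 h8 h10 (by norm_num) ?_ (by norm_num)
    have := mul_log_le_mul_log_of_pow_le (a := 20) (b := 63) two_pos (by norm_num : (2:ℝ) ^ 63 ≤ 9 ^ 20)
    norm_num at this ⊢
    linarith
  · refine bucket 11 14 2.42 h11 h14 (by norm_num) ?_ (by norm_num)
    have := mul_log_le_mul_log_of_pow_le (a := 2) (b := 7) two_pos (by norm_num : (2:ℝ) ^ 7 ≤ 12 ^ 2)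
    norm_num at this ⊢
    linarith

lemma log_nthPrime_succ_le {m M : ℕ} (hm : 6 ≤ m) (hmM : m ≤ M) :
    log (nthPrime (M + 1)) ≤ log (M + 1) + 2 * (log (log (m + 1)) / log m) * log M := by
  have hm' : (6 : ℝ) ≤ m := by exact_mod_cast hm
  have hmM' : (m : ℝ) ≤ M := by exact_mod_cast hmM
  have hlogm : 0 < log (m : ℝ) := log_pos (by linarith)
  have hlogM : 0 < log (M : ℝ) := log_pos (by linarith)
  rcases le_or_gt m 14 with h14 | h15
  · have hg : 1 / 3 ≤ log (log (m + 1)) / log m := by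
      rw [le_div_iff₀ hlogm]
      linarith [log_le_three_mul_log_log_succ hm h14]
    have := log_nthPrime_succ_le_log_succ_add_two_thirds_mul_log (hm.trans hmM)
    nlinarith
  · have h15' : (15 : ℝ) ≤ m := by exact_mod_cast h15
    have hcheb := sub_one_mul_log_two_le_mul_log_nthPrime (j := M + 1) (by omega)
    push_cast at hcheb
    have hp := log_le_log_add_two_mul_log_log (nthPrime_cast_pos _) (by linarith) hcheb
    have he : exp 1 ≤ log (m + 1) := by
      have := mul_log_le_mul_log_of_pow_le (a := 1) (b := 4) two_pos
        (by norm_num; linarith : (2:ℝ) ^ 4 ≤ (m + 1) ^ 1)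
      push_cast at this
      linarith [log_two_gt_d9, exp_one_lt_d9]
    have hg := log_log_succ_div_log_le_of_le (by linarith) he hmM'
    rw [div_le_iff₀ hlogM] at hg
    nlinarith

lemma prefixSum_le_mul_pow (k n : ℕ) : prefixSum k n ≤ n * nthPrime n ^ k := by
  calc prefixSum k n ≤ (Finset.Icc 1 n).card • nthPrime n ^ k :=
        Finset.sum_le_card_nsmul _ _ _ fun j hj ↦
          Nat.pow_le_pow_left (nthPrime_mono (Finset.mem_Icc.mp hj).2) k
    _ = n * nthPrime n ^ k := by simp

lemma prefixSum_pos (k : ℕ) {n : ℕ} (hn : 1 ≤ n) : 0 < prefixSum k n :=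
  Finset.sum_pos (fun j _ ↦ pow_pos (nthPrime_prime j).pos k) ⟨1, Finset.mem_Icc.mpr ⟨le_rfl, hn⟩⟩

lemma log_le_of_lt_prefixSum_succ {k M : ℕ} {x : ℝ} (hx : 0 < x)
    (h : x < prefixSum k (M + 1)) : log x ≤ log (M + 1) + k * log (nthPrime (M + 1)) := by
  have hp := nthPrime_cast_pos (M + 1)
  have hle : x ≤ ((M : ℝ) + 1) * (nthPrime (M + 1) : ℝ) ^ k := by
    refine h.le.trans ?_
    exact_mod_cast prefixSum_le_mul_pow k (M + 1)
  calc log x ≤ log (((M : ℝ) + 1) * (nthPrime (M + 1) : ℝ) ^ k) := log_le_log hx hle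
    _ = log (M + 1) + k * log (nthPrime (M + 1)) := by
      rw [log_mul (by positivity) (by positivity), log_pow]

lemma add_one_mul_B (y : ℝ) (k : ℕ) :
    ((k : ℝ) + 1) * B y k =
      (k + 1) * (log (y + 1) / log y) + 2 * k * (log (log (y + 1)) / log y) := by
  have hk1 : (k : ℝ) + 1 ≠ 0 := by positivity
  rw [B, log_pow]
  field_simp
  ring

lemma B_nonneg {y : ℝ} (hy : 2 ≤ y) (k : ℕ) : 0 ≤ B y k := by
  have hlogy : 0 ≤ log y := log_nonneg (by linarith)
  have hlog1 : 1 ≤ log (y + 1) :=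
    (le_log_iff_exp_le (by linarith)).mpr (by linarith [exp_one_lt_d9])
  have hloglog : 0 ≤ log (log (y + 1) ^ 2) := log_nonneg (one_le_pow₀ hlog1)
  exact add_nonneg (div_nonneg (by linarith) hlogy)
    (mul_nonneg (div_nonneg hloglog hlogy) (by positivity))

theorem logM_lower_general (k M0 : ℕ) (hM0 : 6 ≤ M0)
    (x : ℝ) (M : ℕ)
    (hM1 : (prefixSum k M : ℝ) ≤ x) (hM2 : x < (prefixSum k (M + 1) : ℝ))
    (hMM0 : M0 ≤ M) :
    Real.log (M : ℝ) ≥ Real.log x / (((k : ℝ) + 1) * B (M0 : ℝ) k) := by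
  have hM0' : (6 : ℝ) ≤ M0 := by exact_mod_cast hM0
  have hMM0' : (M0 : ℝ) ≤ M := by exact_mod_cast hMM0
  have hlogM : 0 < log (M : ℝ) := log_pos (by linarith)
  have hx : 0 < x := lt_of_lt_of_le (by exact_mod_cast prefixSum_pos k (by omega)) hM1
  rw [ge_iff_le]
  refine div_le_of_le_mul₀ (mul_nonneg (by positivity) (B_nonneg (by linarith) k)) hlogM.le ?_
  rw [add_one_mul_B]
  set r := log ((M0 : ℝ) + 1) / log M0
  set g := log (log ((M0 : ℝ) + 1)) / log M0
  have hr : log ((M : ℝ) + 1) ≤ r * log M :=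
    (div_le_iff₀ hlogM).mp (log_succ_div_log_le_of_le (by linarith) hMM0')
  have hp : log (nthPrime (M + 1)) ≤ log (M + 1) + 2 * g * log M := log_nthPrime_succ_le hM0 hMM0
  have hk : (0 : ℝ) ≤ k := k.cast_nonneg
  calc log x ≤ log (M + 1) + k * log (nthPrime (M + 1)) := log_le_of_lt_prefixSum_succ hx hM2
    _ ≤ (k + 1) * log (M + 1) + 2 * k * g * log M := by nlinarith [mul_le_mul_of_nonneg_left hp hk]
    _ ≤ (k + 1) * (r * log M) + 2 * k * g * log M := by gcongr
    _ = log M * ((k + 1) * r + 2 * k * g) := by ring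

theorem logM_lower (k M0 : ℕ) (hk : 1 < k) (hM0 : 6 ≤ M0)
    (x : ℝ) (M : ℕ)
    (hM1 : (prefixSum k M : ℝ) ≤ x) (hM2 : x < (prefixSum k (M + 1) : ℝ))
    (hMM0 : M0 ≤ M) :
    Real.log (M : ℝ) ≥ Real.log x / (((k : ℝ) + 1) * B (M0 : ℝ) k) :=
  logM_lower_general k M0 hM0 x M hM1 hM2 hMM0
end
end

section
/- Let k > 1 and M_0 ≥ 6 be integers and let x be a real number such that M := M(x,k) satisfies M ≥ M_0. Then 1/log(x/M) ≤ E(M_0,k)/log x, where E(y,k) = 1 + 1/((k+1)·A(y) - 1) and A(y) = log(y/2)/log y. -/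
noncomputable section

/-!
Since `p_j ≥ j + 1`, the top half of the sum `p_1^k + ... + p_M^k` already gives
`x ≥ (M/2)^(k+1)`, i.e. `log x ≥ (k+1) log (M/2) = (k+1) A(M) log M`. As `A` increases,
`log M ≤ log x / a` with `a = (k+1) A(M₀)`, and `a > 1` because `A(6) > 1/3`. Hence
`log (x/M) = log x - log M ≥ (1 - 1/a) log x`, and `1/(1 - 1/a) = E(M₀, k)`.
-/

open Finset Real

lemma succ_le_nthPrime (j : ℕ) : j + 1 ≤ nthPrime j := by
  have := Nat.add_two_le_nth_prime (j - 1)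
  unfold nthPrime
  omega

lemma half_pow_succ_le_prefixSum (k M : ℕ) : ((M : ℝ) / 2) ^ (k + 1) ≤ prefixSum k M := by
  have hcard : (M : ℝ) / 2 ≤ (#(Icc (M / 2 + 1) M) : ℝ) := by
    rw [Nat.card_Icc]
    have : (M : ℝ) ≤ 2 * ((M + 1 - (M / 2 + 1) : ℕ) : ℝ) := by exact_mod_cast (by omega)
    linarith
  have hterm : ∀ j ∈ Icc (M / 2 + 1) M, (M : ℝ) / 2 ≤ nthPrime j := fun j hj => by
    have := succ_le_nthPrime j
    rw [mem_Icc] at hj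
    have : (M : ℝ) ≤ 2 * (nthPrime j : ℝ) := by exact_mod_cast (by omega)
    linarith
  calc ((M : ℝ) / 2) ^ (k + 1) = (M / 2) * (M / 2) ^ k := pow_succ' _ _
    _ ≤ #(Icc (M / 2 + 1) M) * ((M : ℝ) / 2) ^ k := by gcongr
    _ = ∑ _j ∈ Icc (M / 2 + 1) M, ((M : ℝ) / 2) ^ k := by rw [sum_const, nsmul_eq_mul]
    _ ≤ ∑ j ∈ Icc (M / 2 + 1) M, (nthPrime j : ℝ) ^ k :=
        sum_le_sum fun j hj => pow_le_pow_left₀ (by positivity) (hterm j hj) k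
    _ ≤ ∑ j ∈ Icc 1 M, (nthPrime j : ℝ) ^ k :=
        sum_le_sum_of_subset_of_nonneg (Icc_subset_Icc_left (by omega))
          fun _ _ _ => by positivity
    _ = prefixSum k M := by simp [prefixSum]

lemma A_eq_one_sub {y : ℝ} (hy : 1 < y) : A y = 1 - log 2 / log y := by
  rw [A, log_div (by positivity) two_ne_zero, sub_div, div_self (log_pos hy).ne']

lemma A_mul_log {y : ℝ} (hy : 1 < y) : A y * log y = log (y / 2) :=
  div_mul_cancel₀ _ (log_pos hy).ne'

lemma monotoneOn_A : MonotoneOn A (Set.Ioi 1) := fun y hy z hz hyz => by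
  rw [A_eq_one_sub hy, A_eq_one_sub hz]
  have := log_pos hy
  gcongr
  exact zero_lt_one.trans hy

lemma one_third_lt_A {y : ℝ} (hy : 6 ≤ y) : 1 / 3 < A y := by
  have hlog6 : 0 < log 6 := log_pos (by norm_num)
  -- `log 2 / log 6 < 2 / 3` is `log 8 < log 36`
  have h : 3 * log 2 < 2 * log 6 := by
    rw [← log_rpow two_pos, ← log_rpow (by norm_num)]
    exact log_lt_log (by positivity) (by norm_num)
  have : log 2 / log y ≤ log 2 / log 6 := by gcongr
  have : log 2 / log 6 < 2 / 3 := by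
    rw [div_lt_iff₀ hlog6]
    linarith
  rw [A_eq_one_sub (by linarith)]
  linarith

lemma one_div_sub_le_of_mul_le {a l L : ℝ} (ha : 1 < a) (hL : 0 < L) (h : a * l ≤ L) :
    1 / (L - l) ≤ (1 + 1 / (a - 1)) / L := by
  have ha' : 0 < a - 1 := by linarith
  have hl : l ≤ L / a := by rwa [le_div_iff₀ (by linarith), mul_comm]
  calc 1 / (L - l) ≤ 1 / (L * (a - 1) / a) := by
        gcongr
        calc L * (a - 1) / a = L - L / a := by field_simp
          _ ≤ L - l := by linarith
    _ = (1 + 1 / (a - 1)) / L := by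
        field_simp
        ring

theorem inv_log_x_div_M_le_general (k M0 : ℕ) (hk : 1 < k) (hM0 : 6 ≤ M0)
    (x : ℝ) (M : ℕ)
    (hM1 : (prefixSum k M : ℝ) ≤ x)
    (hMM0 : M0 ≤ M) :
    1 / Real.log (x / (M : ℝ)) ≤ E (M0 : ℝ) k / Real.log x := by
  have hM0' : (6 : ℝ) ≤ M0 := by exact_mod_cast hM0
  have hM : (M0 : ℝ) ≤ M := by exact_mod_cast hMM0
  have hMpos : (0 : ℝ) < M := by linarith
  have hlogM : 0 < log M := log_pos (by linarith)
  have hk3 : (3 : ℝ) ≤ k + 1 := by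
    have : (2 : ℝ) ≤ k := by exact_mod_cast hk
    linarith
  have ha : 1 < (k + 1) * A M0 := by nlinarith [one_third_lt_A hM0']
  have hxM : ((M : ℝ) / 2) ^ (k + 1) ≤ x := (half_pow_succ_le_prefixSum k M).trans hM1
  have hx : 0 < x := lt_of_lt_of_le (by positivity) hxM
  have hkey : (k + 1) * A M0 * log M ≤ log x :=
    calc (k + 1) * A M0 * log M ≤ (k + 1) * (A M * log M) := by
          rw [mul_assoc]
          gcongr
          exact monotoneOn_A (Set.mem_Ioi.2 (by linarith)) (Set.mem_Ioi.2 (by linarith)) hM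
      _ = log (((M : ℝ) / 2) ^ (k + 1)) := by
          rw [A_mul_log (by linarith), log_pow]
          push_cast
          ring
      _ ≤ log x := log_le_log (by positivity) hxM
  rw [log_div hx.ne' hMpos.ne']
  exact one_div_sub_le_of_mul_le ha (lt_of_lt_of_le (by positivity) hkey) hkey

theorem inv_log_x_div_M_le (k M0 : ℕ) (hk : 1 < k) (hM0 : 6 ≤ M0)
    (x : ℝ) (M : ℕ)
    (hM1 : (prefixSum k M : ℝ) ≤ x) (hM2 : x < (prefixSum k (M + 1) : ℝ))
    (hMM0 : M0 ≤ M) :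
    1 / Real.log (x / (M : ℝ)) ≤ E (M0 : ℝ) k / Real.log x :=
  inv_log_x_div_M_le_general k M0 hk hM0 x M hM1 hMM0
end
end
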